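/- arXiv:1610.03142 — 3 statements merged into one kernel-verified Lean document; each statement's English description precedes it below -/
import Mathlib

section
/- If F = {f_1, ..., f_n} is a biangular tight unit-norm frame for F^m with frame angles alpha_1 and alpha_2 and corresponding frame angle multiplicities tau_1 and tau_2, then tau_1 = ((n-1)/(alpha_2^2 - alpha_1^2)) * (alpha_2^2 - (n-m)/(m(n-1))) and tau_2 = ((n-1)/(alpha_1^2 - alpha_2^2)) * (alpha_1^2 - (n-m)/(m(n-1))). -/
/-!
Pairing the frame identity `∑ⱼ ⟪fⱼ, v⟫ fⱼ = a v` with `v` gives `∑ⱼ |⟪v, fⱼ⟫|² = a ‖v‖²`.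
At `v = fⱼ` this reads `τ₁ α₁² + τ₂ α₂² = a - 1`, and summed over an orthonormal basis it gives
the trace identity `n = a m`. Together with `τ₁ + τ₂ = n - 1` this is a linear system for
`τ₁, τ₂` whose determinant `α₂² - α₁²` is nonzero because both angles are nonnegative.
-/

open Finset

section TightFrame

variable {𝕜 E ι : Type*} [RCLike 𝕜] [NormedAddCommGroup E] [InnerProductSpace 𝕜 E] [Fintype ι]
  {f : ι → E} {a : ℝ}

theorem sum_norm_inner_sq_of_tight
    (h_tight : ∀ v, ∑ j, (inner 𝕜 (f j) v : 𝕜) • f j = (a : 𝕜) • v) (v : E) :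
    ∑ j, ‖(inner 𝕜 v (f j) : 𝕜)‖ ^ 2 = a * ‖v‖ ^ 2 := by
  have h := congrArg (inner 𝕜 v) (h_tight v)
  simp only [inner_sum, inner_smul_right, ← inner_conj_symm v (f _), RCLike.mul_conj,
    inner_self_eq_norm_sq_to_K] at h
  simp_rw [norm_inner_symm v]
  exact_mod_cast h

theorem sum_norm_sq_of_tight [FiniteDimensional 𝕜 E]
    (h_tight : ∀ v, ∑ j, (inner 𝕜 (f j) v : 𝕜) • f j = (a : 𝕜) • v) :
    ∑ j, ‖f j‖ ^ 2 = a * Module.finrank 𝕜 E := by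
  let b := stdOrthonormalBasis 𝕜 E
  calc ∑ j, ‖f j‖ ^ 2 = ∑ i, ∑ j, ‖(inner 𝕜 (b i) (f j) : 𝕜)‖ ^ 2 := by
        rw [Finset.sum_comm]; simp only [b.sum_sq_norm_inner_right]
    _ = a * Module.finrank 𝕜 E := by
        simp [sum_norm_inner_sq_of_tight h_tight, b.orthonormal.1, mul_comm]

end TightFrame

theorem sum_comp_eq_card_smul_add_card_smul {ι β M : Type*} [DecidableEq β] [AddCommMonoid M]
    {s : Finset ι} {g : ι → β} {α₁ α₂ : β} (hne : α₁ ≠ α₂) (hg : ∀ i ∈ s, g i = α₁ ∨ g i = α₂)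
    (φ : β → M) :
    ∑ i ∈ s, φ (g i) = #(s.filter (g · = α₁)) • φ α₁ + #(s.filter (g · = α₂)) • φ α₂ := by
  have h₂ : s.filter (g · = α₂) = s.filter (¬ g · = α₁) :=
    filter_congr fun i hi ↦ by rcases hg i hi with h | h <;> simp [h, hne, hne.symm]
  rw [h₂, ← sum_filter_add_sum_filter_not s (g · = α₁)]
  congr 1 <;> rw [← sum_const] <;> exact sum_congr rfl fun i hi ↦ by
    rcases hg i (mem_filter.1 hi).1 with h | h <;> simp_all

noncomputable def angleMultiplicity (𝕜 : Type*) {E ι : Type*} [RCLike 𝕜] [NormedAddCommGroup E]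
    [InnerProductSpace 𝕜 E] (f : ι → E) (j : ι) (α : ℝ) : ℕ :=
  Nat.card {j' : ι | j' ≠ j ∧ ‖(inner 𝕜 (f j) (f j') : 𝕜)‖ = α}

section Multiplicities

variable {𝕜 E ι : Type*} [RCLike 𝕜] [NormedAddCommGroup E] [InnerProductSpace 𝕜 E] [Fintype ι]
  [DecidableEq ι] {f : ι → E} {j : ι} {α₁ α₂ : ℝ}

theorem angleMultiplicity_eq_card_filter (f : ι → E) (j : ι) (α : ℝ) :
    angleMultiplicity 𝕜 f j α =
      #((univ.erase j).filter fun j' ↦ ‖(inner 𝕜 (f j) (f j') : 𝕜)‖ = α) := by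
  rw [angleMultiplicity, Nat.card_eq_fintype_card, Fintype.card_subtype]
  congr 1
  ext j'
  simp

theorem angleMultiplicity_add_angleMultiplicity (hne : α₁ ≠ α₂)
    (hval : ∀ j' ≠ j, ‖(inner 𝕜 (f j) (f j') : 𝕜)‖ = α₁ ∨ ‖(inner 𝕜 (f j) (f j') : 𝕜)‖ = α₂) :
    (angleMultiplicity 𝕜 f j α₁ : ℝ) + angleMultiplicity 𝕜 f j α₂ = Fintype.card ι - 1 := by
  have h := sum_comp_eq_card_smul_add_card_smul (s := univ.erase j) hne
    (fun j' hj' ↦ hval j' (ne_of_mem_erase hj')) (fun _ ↦ (1 : ℝ))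
  rw [sum_const, nsmul_one, cast_card_erase_of_mem (mem_univ j), card_univ, nsmul_one,
    nsmul_one] at h
  rw [angleMultiplicity_eq_card_filter, angleMultiplicity_eq_card_filter, ← h]

theorem angleMultiplicity_mul_sq_add {a : ℝ}
    (h_tight : ∀ v, ∑ j, (inner 𝕜 (f j) v : 𝕜) • f j = (a : 𝕜) • v) (h_norm : ‖f j‖ = 1)
    (hne : α₁ ≠ α₂)
    (hval : ∀ j' ≠ j, ‖(inner 𝕜 (f j) (f j') : 𝕜)‖ = α₁ ∨ ‖(inner 𝕜 (f j) (f j') : 𝕜)‖ = α₂) :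
    angleMultiplicity 𝕜 f j α₁ * α₁ ^ 2 + angleMultiplicity 𝕜 f j α₂ * α₂ ^ 2 = a - 1 := by
  have h := sum_comp_eq_card_smul_add_card_smul (s := univ.erase j) hne
    (fun j' hj' ↦ hval j' (ne_of_mem_erase hj')) (· ^ 2)
  rw [sum_erase_eq_sub (mem_univ j), sum_norm_inner_sq_of_tight h_tight,
    inner_self_eq_norm_sq_to_K, h_norm, nsmul_eq_mul, nsmul_eq_mul] at h
  rw [angleMultiplicity_eq_card_filter, angleMultiplicity_eq_card_filter, ← h]
  norm_num

end Multiplicities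

theorem eq_of_add_eq_of_add_mul_sq_eq {x y α β a n m : ℝ} (hαβ : β ^ 2 - α ^ 2 ≠ 0) (hm : m ≠ 0)
    (hn : n - 1 ≠ 0) (hsum : x + y = n - 1) (hwsum : x * α ^ 2 + y * β ^ 2 = a - 1)
    (htrace : n = a * m) :
    x = (n - 1) / (β ^ 2 - α ^ 2) * (β ^ 2 - (n - m) / (m * (n - 1))) := by
  rw [div_mul_eq_mul_div, eq_div_iff hαβ]
  field_simp
  linear_combination m * β ^ 2 * hsum - m * hwsum + htrace

theorem statement2_general {𝕜 : Type*} [RCLike 𝕜] {m n : ℕ}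
    (f : Fin n → EuclideanSpace 𝕜 (Fin m)) (a : ℝ) (α₁ α₂ : ℝ) (τ₁ τ₂ : ℕ)
    (h_norm : ∀ j, ‖f j‖ = 1)
    (h_tight : ∀ v : EuclideanSpace 𝕜 (Fin m),
      ∑ j, (inner 𝕜 (f j) v : 𝕜) • f j = (a : 𝕜) • v)
    (h_angles : {r : ℝ | ∃ j j', j ≠ j' ∧ ‖(inner 𝕜 (f j) (f j') : 𝕜)‖ = r} = {α₁, α₂})
    (h_ne : α₁ ≠ α₂)
    (h_mult₁ : ∀ j, Nat.card {j' : Fin n | j' ≠ j ∧ ‖(inner 𝕜 (f j) (f j') : 𝕜)‖ = α₁} = τ₁)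
    (h_mult₂ : ∀ j, Nat.card {j' : Fin n | j' ≠ j ∧ ‖(inner 𝕜 (f j) (f j') : 𝕜)‖ = α₂} = τ₂) :
    (τ₁ : ℝ) = ((n : ℝ) - 1) / (α₂ ^ 2 - α₁ ^ 2) *
        (α₂ ^ 2 - ((n : ℝ) - m) / ((m : ℝ) * ((n : ℝ) - 1))) ∧
    (τ₂ : ℝ) = ((n : ℝ) - 1) / (α₁ ^ 2 - α₂ ^ 2) *
        (α₁ ^ 2 - ((n : ℝ) - m) / ((m : ℝ) * ((n : ℝ) - 1))) := by
  obtain ⟨j, j', hjj', hα₁⟩ : α₁ ∈ {r : ℝ | ∃ j j', j ≠ j' ∧ ‖(inner 𝕜 (f j) (f j') : 𝕜)‖ = r} :=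
    h_angles ▸ Set.mem_insert α₁ {α₂}
  obtain ⟨_, _, -, hα₂⟩ : α₂ ∈ {r : ℝ | ∃ j j', j ≠ j' ∧ ‖(inner 𝕜 (f j) (f j') : 𝕜)‖ = r} :=
    h_angles ▸ Set.mem_insert_of_mem α₁ rfl
  have hval (j' : Fin n) (hj' : j' ≠ j) :
      ‖(inner 𝕜 (f j) (f j') : 𝕜)‖ = α₁ ∨ ‖(inner 𝕜 (f j) (f j') : 𝕜)‖ = α₂ := by
    have h : ‖(inner 𝕜 (f j) (f j') : 𝕜)‖ ∈ ({α₁, α₂} : Set ℝ) :=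
      h_angles ▸ ⟨j, j', hj'.symm, rfl⟩
    simpa using h
  have hsum := angleMultiplicity_add_angleMultiplicity h_ne hval
  have hwsum := angleMultiplicity_mul_sq_add h_tight (h_norm j) h_ne hval
  rw [show angleMultiplicity 𝕜 f j α₁ = τ₁ from h_mult₁ j,
    show angleMultiplicity 𝕜 f j α₂ = τ₂ from h_mult₂ j] at hsum hwsum
  rw [Fintype.card_fin] at hsum
  have htrace := sum_norm_sq_of_tight h_tight
  simp only [h_norm, one_pow, sum_const, card_univ, Fintype.card_fin, nsmul_one,
    finrank_euclideanSpace_fin] at htrace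
  have hn : 1 < n := by simpa using Fintype.one_lt_card_iff.2 ⟨j, j', hjj'⟩
  have hn' : (n : ℝ) - 1 ≠ 0 := sub_ne_zero.2 (by exact_mod_cast hn.ne')
  have hm : (m : ℝ) ≠ 0 := by
    rintro hm
    rw [hm, mul_zero, Nat.cast_eq_zero] at htrace
    omega
  have hαβ : α₂ ^ 2 - α₁ ^ 2 ≠ 0 := sub_ne_zero.2 fun h ↦
    h_ne ((sq_eq_sq₀ (hα₁ ▸ norm_nonneg _) (hα₂ ▸ norm_nonneg _)).1 h.symm)
  exact ⟨eq_of_add_eq_of_add_mul_sq_eq hαβ hm hn' hsum hwsum htrace,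
    eq_of_add_eq_of_add_mul_sq_eq (sub_ne_zero.2 (sub_ne_zero.1 hαβ).symm) hm hn'
      ((add_comm _ _).trans hsum) ((add_comm _ _).trans hwsum) htrace⟩

/-- If `F = {f_1, ..., f_n}` is a biangular tight unit-norm frame for `𝔽^m`
with frame angles `α₁, α₂` and corresponding frame angle multiplicities `τ₁, τ₂`, then
`τ₁ = ((n-1)/(α₂² - α₁²)) (α₂² - (n-m)/(m(n-1)))` and
`τ₂ = ((n-1)/(α₁² - α₂²)) (α₁² - (n-m)/(m(n-1)))`. -/
theorem statement2 {𝕜 : Type*} [RCLike 𝕜] {m n : ℕ}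
    (f : Fin n → EuclideanSpace 𝕜 (Fin m)) (a : ℝ) (α₁ α₂ : ℝ) (τ₁ τ₂ : ℕ)
    (h_span : Submodule.span 𝕜 (Set.range f) = ⊤)
    (h_norm : ∀ j, ‖f j‖ = 1)
    (ha : 0 < a)
    (h_tight : ∀ v : EuclideanSpace 𝕜 (Fin m),
      ∑ j, (inner 𝕜 (f j) v : 𝕜) • f j = (a : 𝕜) • v)
    (h_angles : {r : ℝ | ∃ j j', j ≠ j' ∧ ‖(inner 𝕜 (f j) (f j') : 𝕜)‖ = r} = {α₁, α₂})
    (h_ne : α₁ ≠ α₂)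
    (h_pos₁ : 0 < τ₁) (h_pos₂ : 0 < τ₂)
    (h_mult₁ : ∀ j, Nat.card {j' : Fin n | j' ≠ j ∧ ‖(inner 𝕜 (f j) (f j') : 𝕜)‖ = α₁} = τ₁)
    (h_mult₂ : ∀ j, Nat.card {j' : Fin n | j' ≠ j ∧ ‖(inner 𝕜 (f j) (f j') : 𝕜)‖ = α₂} = τ₂) :
    (τ₁ : ℝ) = ((n : ℝ) - 1) / (α₂ ^ 2 - α₁ ^ 2) *
        (α₂ ^ 2 - ((n : ℝ) - m) / ((m : ℝ) * ((n : ℝ) - 1))) ∧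
    (τ₂ : ℝ) = ((n : ℝ) - 1) / (α₁ ^ 2 - α₂ ^ 2) *
        (α₁ ^ 2 - ((n : ℝ) - m) / ((m : ℝ) * ((n : ℝ) - 1))) :=
  statement2_general f a α₁ α₂ τ₁ τ₂ h_norm h_tight h_angles h_ne h_mult₁ h_mult₂
end

section
/- If F = {f_x}_{x in G} is the G-harmonic frame for C^m generated by an m-element subset S of G, then for every x, y in G one has n^2 * |<f_x, f_y>|^2 = sum_{xi in G} rho_{y-x}(xi) * ||X_xi||_{H.S.}^2, where X_xi is the xi-th G-modulation operator of F. -/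
open Finset

/-- The underlying finite abelian group `G = ZMod n₁ ⊕ ... ⊕ ZMod n_k`
(a fixed cyclic decomposition). -/
abbrev PiG {k : ℕ} (nn : Fin k → ℕ) : Type := ∀ i, ZMod (nn i)

/-- The character `ρ_x(y) = exp(2πi (x(1)y(1)/n₁ + ... + x(k)y(k)/n_k))`. -/
noncomputable def rho {k : ℕ} (nn : Fin k → ℕ) (x y : PiG nn) : ℂ :=
  Complex.exp (2 * (Real.pi : ℂ) * Complex.I *
    ∑ i, ((x i).val : ℂ) * ((y i).val : ℂ) / ((nn i : ℕ) : ℂ))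

/-- The vector `f_x = (1/√m) (ρ_{g_j}(x))_{j=1}^m` of the `G`-harmonic frame
generated by `S = {g_1, ..., g_m}`, as a function `Fin m → ℂ`. -/
noncomputable def harmFun {k m : ℕ} (nn : Fin k → ℕ) (g : Fin m → PiG nn) (x : PiG nn) :
    Fin m → ℂ :=
  fun j => ((Real.sqrt m : ℝ) : ℂ)⁻¹ * rho nn (g j) x

/-- The `ξ`-th `G`-modulation operator `X_ξ = ∑_x ρ_ξ(x) f_x ⊗ f_x^*` of the harmonic
frame, as an `m × m` matrix with entries `(X_ξ)_{a,b} = ∑_x ρ_ξ(x) f_x(a) conj(f_x(b))`. -/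
noncomputable def modOp {k m : ℕ} (nn : Fin k → ℕ) [∀ i, NeZero (nn i)]
    (g : Fin m → PiG nn) (ξ : PiG nn) : Matrix (Fin m) (Fin m) ℂ :=
  ∑ x : PiG nn, rho nn ξ x •
    Matrix.vecMulVec (harmFun nn g x) (fun b => (starRingEnd ℂ) (harmFun nn g x b))

/-! `ρ` is a symmetric bicharacter of `G`, and `∑_x ρ_ξ(x)` vanishes unless `ξ = 0`. Hence the
modulation operators are sparse: `(X_ξ)_{ab} = (n/m) [g_b - g_a = ξ]`, so the sum over `ξ`
collapses to `(n/m)² ∑_{a,b} ρ(g_b - g_a, y - x)`, while `m |⟨f_x, f_y⟩| = |∑_j ρ(g_j, y - x)|`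
expands to the same double sum. -/

section

variable {k m : ℕ} (nn : Fin k → ℕ) (g : Fin m → PiG nn)

lemma rho_comm (a b : PiG nn) : rho nn a b = rho nn b a := by
  simp only [rho, mul_comm]

lemma harmFun_mul_conj_harmFun (x y : PiG nn) (a b : Fin m) :
    harmFun nn g x a * starRingEnd ℂ (harmFun nn g y b) =
      (m : ℂ)⁻¹ * (rho nn (g a) x * starRingEnd ℂ (rho nn (g b) y)) := by
  have hsqrt : ((Real.sqrt m : ℝ) : ℂ)⁻¹ * ((Real.sqrt m : ℝ) : ℂ)⁻¹ = (m : ℂ)⁻¹ := by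
    rw [← mul_inv, ← Complex.ofReal_mul, Real.mul_self_sqrt m.cast_nonneg, Complex.ofReal_natCast]
  simp only [harmFun, map_mul, map_inv₀, Complex.conj_ofReal, ← hsqrt]
  ring

variable [∀ i, NeZero (nn i)]

lemma rho_eq_prod_stdAddChar (a b : PiG nn) :
    rho nn a b = ∏ i, ZMod.stdAddChar (a i * b i) := by
  rw [rho, Finset.mul_sum, Complex.exp_sum]
  refine Finset.prod_congr rfl fun i _ => ?_
  rw [ZMod.stdAddChar_apply, ← ZMod.natCast_zmod_val (a i * b i), ZMod.val_mul,
    ZMod.natCast_mod, ZMod.toCircle_natCast]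
  push_cast
  ring_nf

noncomputable def rhoChar (a : PiG nn) : AddChar (PiG nn) ℂ where
  toFun := rho nn a
  map_zero_eq_one' := by simp [rho_eq_prod_stdAddChar]
  map_add_eq_mul' b c := by
    simp only [rho_eq_prod_stdAddChar, Pi.add_apply, mul_add, AddChar.map_add_eq_mul,
      Finset.prod_mul_distrib]

@[simp]
lemma rhoChar_apply (a b : PiG nn) : rhoChar nn a b = rho nn a b := rfl

lemma rhoChar_eq_zero_iff {a : PiG nn} : rhoChar nn a = 0 ↔ a = 0 := by
  refine ⟨fun h => funext fun i => ?_, fun h => ?_⟩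
  · have := DFunLike.congr_fun h (Pi.single i 1)
    rw [rhoChar_apply, rho_eq_prod_stdAddChar, Finset.prod_eq_single i (fun j _ hj => by
      simp [Pi.single_eq_of_ne hj]) (by simp)] at this
    rwa [Pi.single_eq_same, mul_one, AddChar.zero_apply,
      ← (ZMod.stdAddChar (N := nn i)).map_zero_eq_one, ZMod.injective_stdAddChar.eq_iff] at this
  · ext b
    rw [h, rhoChar_apply, rho_comm, ← rhoChar_apply, AddChar.map_zero_eq_one, AddChar.zero_apply]

lemma rho_add_left (a b c : PiG nn) : rho nn (a + b) c = rho nn a c * rho nn b c := by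
  simp only [rho_comm nn _ c, ← rhoChar_apply, AddChar.map_add_eq_mul]

lemma rho_mul_conj_right (a b c : PiG nn) :
    rho nn a b * starRingEnd ℂ (rho nn a c) = rho nn a (b - c) := by
  simp only [← rhoChar_apply, ← AddChar.map_neg_eq_conj, ← AddChar.map_add_eq_mul,
    sub_eq_add_neg]

lemma rho_mul_conj_left (a b c : PiG nn) :
    rho nn a c * starRingEnd ℂ (rho nn b c) = rho nn (a - b) c := by
  simpa only [rho_comm nn _ c] using rho_mul_conj_right nn c a b

lemma sum_rho (a : PiG nn) :
    ∑ b, rho nn a b = if a = 0 then (Fintype.card (PiG nn) : ℂ) else 0 := by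
  simpa [rhoChar_eq_zero_iff] using (rhoChar nn a).sum_eq_ite

lemma inner_harmFun (x y : PiG nn) :
    ∑ j, starRingEnd ℂ (harmFun nn g x j) * harmFun nn g y j =
      (m : ℂ)⁻¹ * ∑ j, rho nn (g j) (y - x) := by
  simp only [Finset.mul_sum, mul_comm (starRingEnd ℂ _), harmFun_mul_conj_harmFun,
    rho_mul_conj_right]

lemma modOp_apply (ξ : PiG nn) (a b : Fin m) :
    modOp nn g ξ a b = if g b - g a = ξ then (Fintype.card (PiG nn) : ℂ) / m else 0 := by
  simp only [modOp, Matrix.sum_apply, Matrix.smul_apply, Matrix.vecMulVec_apply, smul_eq_mul,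
    harmFun_mul_conj_harmFun, rho_mul_conj_left, mul_left_comm _ (m : ℂ)⁻¹, ← rho_add_left,
    ← Finset.mul_sum, sum_rho]
  have hξ : ξ + (g a - g b) = 0 ↔ g b - g a = ξ := by
    rw [← neg_sub, ← sub_eq_add_neg, sub_eq_zero, eq_comm]
  simp only [hξ, mul_ite, mul_zero, div_eq_inv_mul]

lemma trace_modOp_mul_conjTranspose (ξ : PiG nn) :
    (modOp nn g ξ * (modOp nn g ξ).conjTranspose).trace =
      ∑ a, ∑ b, if g b - g a = ξ then ((Fintype.card (PiG nn) : ℂ) / m) ^ 2 else 0 := by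
  simp only [Matrix.trace, Matrix.diag_apply, Matrix.mul_apply, Matrix.conjTranspose_apply,
    modOp_apply]
  refine Finset.sum_congr rfl fun a _ => Finset.sum_congr rfl fun b _ => ?_
  split_ifs <;> simp [sq]

lemma sum_rho_mul_conj (z : PiG nn) :
    (∑ j, rho nn (g j) z) * starRingEnd ℂ (∑ j, rho nn (g j) z) =
      ∑ a, ∑ b, rho nn (g a - g b) z := by
  simp only [map_sum, Finset.sum_mul_sum, rho_mul_conj_left]

lemma sum_rho_mul_trace_modOp (z : PiG nn) :
    ∑ ξ, rho nn z ξ * (modOp nn g ξ * (modOp nn g ξ).conjTranspose).trace =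
      ((Fintype.card (PiG nn) : ℂ) / m) ^ 2 * ∑ a, ∑ b, rho nn (g b - g a) z := by
  simp only [trace_modOp_mul_conjTranspose, Finset.mul_sum, mul_ite, mul_zero]
  rw [Finset.sum_comm]
  refine Finset.sum_congr rfl fun a _ => ?_
  rw [Finset.sum_comm]
  simp only [Finset.sum_ite_eq, Finset.mem_univ, if_true, rho_comm nn z, mul_comm]

end

theorem statement7_general {k m : ℕ} (nn : Fin k → ℕ) [∀ i, NeZero (nn i)]
    (g : Fin m → PiG nn) (x y : PiG nn) :
    (Fintype.card (PiG nn) : ℂ) ^ 2 *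
        (‖∑ j, (starRingEnd ℂ) (harmFun nn g x j) * harmFun nn g y j‖ : ℂ) ^ 2 =
      ∑ ξ : PiG nn, rho nn (y - x) ξ *
        (modOp nn g ξ * (modOp nn g ξ).conjTranspose).trace := by
  rw [inner_harmFun, ← Complex.mul_conj', map_mul, mul_mul_mul_comm, sum_rho_mul_conj,
    sum_rho_mul_trace_modOp, Finset.sum_comm]
  simp only [map_inv₀, map_natCast]
  ring

/-- If `F = {f_x}` is the `G`-harmonic frame for `ℂ^m` generated by an
`m`-element subset `S` of `G`, then for every `x, y ∈ G`,
`n² |⟨f_x, f_y⟩|² = ∑_{ξ ∈ G} ρ_{y-x}(ξ) ‖X_ξ‖²_{H.S.}`,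
where `‖X_ξ‖²_{H.S.} = trace(X_ξ X_ξ^*)`. -/
theorem statement7 {k m : ℕ} (nn : Fin k → ℕ) [∀ i, NeZero (nn i)] (hm : 0 < m)
    (g : Fin m → PiG nn) (hg : Function.Injective g) (x y : PiG nn) :
    (Fintype.card (PiG nn) : ℂ) ^ 2 *
        (‖∑ j, (starRingEnd ℂ) (harmFun nn g x j) * harmFun nn g y j‖ : ℂ) ^ 2 =
      ∑ ξ : PiG nn, rho nn (y - x) ξ *
        (modOp nn g ξ * (modOp nn g ξ).conjTranspose).trace :=
  statement7_general nn g x y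
end

section
/- Let p be a prime of the form p = 8q + 5 with q > 0 and q odd. Then R^{(4)}_p is a proper (p, (p-1)/4, (p+1)/2, lambda, mu)-bidifference set for Z_p relative to R^{(2)}_p union {0} (i.e. with lambda != mu); moreover R^{(4)}_p is a Gaussian difference set for Z_p, but it is not a partial difference set for Z_p and it is not a divisible difference set for Z_p. -/
/-- The set `R⁽²⁾_p = { z² : z ∈ (ZMod p)* }` of quadratic residues mod `p`. -/
def quadRes (p : ℕ) : Set (ZMod p) := {x | ∃ z : ZMod p, z ≠ 0 ∧ z ^ 2 = x}

/-- The set `R⁽⁴⁾_p = { z⁴ : z ∈ (ZMod p)* }` of quartic residues mod `p`. -/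
def quartRes (p : ℕ) : Set (ZMod p) := {x | ∃ z : ZMod p, z ≠ 0 ∧ z ^ 4 = x}

/-- `diffCountSet S x` is the number of ways to write `x = a - b` with `a ≠ b` distinct
elements of `S`. -/
noncomputable def diffCountSet {G : Type*} [AddCommGroup G] (S : Set G) (x : G) : ℕ :=
  Nat.card {q : G × G // q.1 ∈ S ∧ q.2 ∈ S ∧ q.1 ≠ q.2 ∧ q.1 - q.2 = x}

/-- `S` is an `(n, |S|, |A|, λ, μ)`-bidifference set for `G` relative to `A`: `0 ∈ A`,
every nonzero element of `A` is a difference of distinct elements of `S` in exactly `λ`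
ways, and every element of `G \ A` in exactly `μ` ways. -/
def IsBidiffRel {G : Type*} [AddCommGroup G] (S A : Set G) (lam mu : ℕ) : Prop :=
  (0 : G) ∈ A ∧
  (∀ x ∈ A, x ≠ 0 → diffCountSet S x = lam) ∧
  (∀ x : G, x ∉ A → diffCountSet S x = mu)

/-!
Write `p = 4m + 1` with `m = 2q + 1` odd. Then `R⁽⁴⁾_p = {x | x ^ m = 1}` and
`R⁽²⁾_p = {x | x ^ 2m = 1}`; as `m` is odd, `-1 ∉ R⁽⁴⁾_p` and `R⁽²⁾_p = ±R⁽⁴⁾_p`. The number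
`N(x)` of representations of `x` as a difference of quartic residues is invariant under
`x ↦ -x` and under multiplication by quartic residues, so it is a constant `λ` on the squares
and a constant `μ` on the nonsquares. Counting all `m(m - 1)` differences gives
`2m(λ + μ) = m(m - 1)`, so `λ + μ = q` is odd and `λ ≠ μ`. Then `1 ∈ R⁽⁴⁾_p` and `-1 ∉ R⁽⁴⁾_p`
have the same count, which rules out a partial difference set, and neither subgroup `0` nor
`ZMod p` separates `1` from a nonsquare, which rules out a divisible difference set.
-/

open Finset Polynomial

section DiffCount

variable {G : Type*} [AddCommGroup G]

theorem diffCountSet_neg (S : Set G) (x : G) : diffCountSet S (-x) = diffCountSet S x :=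
  Nat.card_congr <| (Equiv.prodComm G G).subtypeEquiv fun ab => by
    simp only [Equiv.prodComm_apply, Prod.fst_swap, Prod.snd_swap, ne_comm, ← neg_sub ab.1 ab.2,
      neg_eq_iff_eq_neg, and_left_comm]

theorem IsBidiffRel.diffCountSet_eq {S A : Set G} {lam mu : ℕ} (h : IsBidiffRel S A lam mu)
    {x y : G} (hx : x ≠ 0) (hy : y ≠ 0) (hxy : x ∈ A ↔ y ∈ A) :
    diffCountSet S x = diffCountSet S y := by
  by_cases hxA : x ∈ A
  · rw [h.2.1 x hxA hx, h.2.1 y (hxy.mp hxA) hy]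
  · rw [h.2.2 x hxA, h.2.2 y (hxy.not.mp hxA)]

theorem diffCountSet_coe_finset [DecidableEq G] (s : Finset G) (x : G) :
    diffCountSet (s : Set G) x = #{ab ∈ s.offDiag | ab.1 - ab.2 = x} := by
  rw [diffCountSet, ← Nat.card_eq_finsetCard]
  exact Nat.card_congr <| Equiv.subtypeEquivRight fun ab => by simp [and_assoc]

theorem diffCountSet_zero (S : Set G) : diffCountSet S 0 = 0 :=
  Nat.card_eq_zero.mpr <| .inl ⟨fun ⟨_, h⟩ => h.2.2.1 (sub_eq_zero.mp h.2.2.2)⟩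

theorem sum_diffCountSet [Fintype G] (S : Set G) :
    ∑ x, diffCountSet S x = S.ncard * S.ncard - S.ncard := by
  classical
  obtain ⟨s, rfl⟩ := S.toFinite.exists_finset_coe
  simp only [diffCountSet_coe_finset, Set.ncard_coe_finset, ← offDiag_card]
  exact (card_eq_sum_card_fiberwise fun _ _ => mem_univ _).symm

theorem diffCountSet_mul_left {F : Type*} [DivisionRing F] {S : Set F} {u : F} (hu : u ≠ 0)
    (hS : ∀ a, u * a ∈ S ↔ a ∈ S) (x : F) : diffCountSet S (u * x) = diffCountSet S x := by
  refine (Nat.card_congr <| ((Equiv.mulLeft₀ u hu).prodCongr (Equiv.mulLeft₀ u hu)).subtypeEquiv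
    fun ab => ?_).symm
  simp only [Equiv.prodCongr_apply, Prod.map, Equiv.mulLeft₀_apply, hS, ← mul_sub, ne_eq,
    mul_right_inj' hu]

end DiffCount

theorem exists_isPrimitiveRoot_of_dvd_card_sub_one {K : Type*} [Field K] [Fintype K] {n : ℕ}
    (hn : n ∣ Fintype.card K - 1) : ∃ ζ : K, IsPrimitiveRoot ζ n := by
  classical
  obtain ⟨g, hg⟩ := IsCyclic.exists_ofOrder_eq_natCard (α := Kˣ)
  rw [Nat.card_eq_fintype_card, Fintype.card_units] at hg
  have hg0 : orderOf g ≠ 0 := by rw [hg]; have := Fintype.one_lt_card (α := K); omega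
  refine ⟨(g ^ (orderOf g / n) : Kˣ), IsPrimitiveRoot.coe_units_iff.mpr ?_⟩
  exact IsPrimitiveRoot.iff_orderOf.mpr (orderOf_pow_orderOf_div hg0 (hg ▸ hn))

theorem ne_zero_of_pow_eq_neg_one {R : Type*} [Ring R] [Nontrivial R] {x : R} {k : ℕ}
    (hk : k ≠ 0) (h : x ^ k = -1) : x ≠ 0 :=
  ne_zero_pow hk (h ▸ neg_ne_zero.mpr one_ne_zero)

theorem ZMod.not_isBidiffRel_addSubgroup {p : ℕ} [Fact p.Prime] {S : Set (ZMod p)} {x y : ZMod p}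
    (hx : x ≠ 0) (hy : y ≠ 0) (hxy : diffCountSet S x ≠ diffCountSet S y) :
    ¬ ∃ (H : AddSubgroup (ZMod p)) (lam mu : ℕ), IsBidiffRel S (H : Set (ZMod p)) lam mu := by
  rintro ⟨H, lam, mu, h⟩
  refine hxy (h.diffCountSet_eq hx hy ?_)
  rcases H.normal_of_isAddCommutative.eq_bot_or_eq_top with rfl | rfl
  · simp [hx, hy]
  · simp

section ResidueClasses

variable {p m : ℕ} [Fact p.Prime]

theorem mem_quartRes_iff (hm : Odd m) (hpm : p = 4 * m + 1) {x : ZMod p} :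
    x ∈ quartRes p ↔ x ^ m = 1 := by
  constructor
  · rintro ⟨z, hz, rfl⟩
    rw [← pow_mul, ← ZMod.pow_card_sub_one_eq_one hz]
    congr 1
    omega
  · intro hx
    have hcop : m.Coprime 4 := (Nat.coprime_two_right.mpr hm).pow_right 2
    obtain ⟨z, rfl, hz⟩ := (pow_eq_pow_iff_of_coprime hcop).mp (hx.trans (one_pow 4).symm)
    exact ⟨z, fun h => by simp [h, hm.pos.ne'] at hz, rfl⟩

theorem mem_quadRes_iff (hpm : p = 4 * m + 1) {x : ZMod p} :
    x ∈ quadRes p ↔ x ^ (2 * m) = 1 := by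
  have hp2 : p / 2 = 2 * m := by omega
  constructor
  · rintro ⟨z, hz, rfl⟩
    rw [← pow_mul, ← ZMod.pow_card_sub_one_eq_one hz]
    congr 1
    omega
  · intro hx
    have hx0 : x ≠ 0 := by
      have := (Fact.out : p.Prime).two_le
      exact ne_zero_pow (by omega) (hx ▸ one_ne_zero)
    obtain ⟨z, rfl⟩ := (ZMod.euler_criterion p hx0).mpr (hp2 ▸ hx)
    exact ⟨z, fun h => hx0 (by simp [h]), sq z⟩

theorem pow_two_mul_eq_one_or_neg_one (hpm : p = 4 * m + 1) {x : ZMod p} (hx : x ≠ 0) :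
    x ^ (2 * m) = 1 ∨ x ^ (2 * m) = -1 := by
  rw [← show p / 2 = 2 * m by omega]
  exact ZMod.pow_div_two_eq_neg_one_or_one p hx

theorem exists_pow_two_mul_eq_neg_one (hpm : p = 4 * m + 1) : ∃ n : ZMod p, n ^ (2 * m) = -1 := by
  obtain ⟨n, hn⟩ := FiniteField.exists_nonsquare (F := ZMod p) (by
    rw [ZMod.ringChar_zmod_n]; omega)
  have hn0 : n ≠ 0 := by rintro rfl; exact hn ⟨0, by simp⟩
  refine ⟨n, (pow_two_mul_eq_one_or_neg_one hpm hn0).resolve_left fun h => hn ?_⟩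
  exact (ZMod.euler_criterion p hn0).mpr (by rwa [show p / 2 = 2 * m by omega])

theorem quartRes_eq_nthRootsFinset (hm : Odd m) (hpm : p = 4 * m + 1) :
    quartRes p = nthRootsFinset m (1 : ZMod p) := by
  ext x
  rw [mem_coe, mem_nthRootsFinset hm.pos, mem_quartRes_iff hm hpm]

theorem ncard_quartRes (hm : Odd m) (hpm : p = 4 * m + 1) : (quartRes p).ncard = m := by
  obtain ⟨ζ, hζ⟩ := exists_isPrimitiveRoot_of_dvd_card_sub_one (K := ZMod p) (n := m)
    ⟨4, by rw [ZMod.card]; omega⟩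
  rw [quartRes_eq_nthRootsFinset hm hpm, Set.ncard_coe_finset, hζ.card_nthRootsFinset]

theorem ncard_quadRes (hpm : p = 4 * m + 1) : (quadRes p).ncard = 2 * m := by
  obtain ⟨ζ, hζ⟩ := exists_isPrimitiveRoot_of_dvd_card_sub_one (K := ZMod p) (n := 2 * m)
    ⟨2, by rw [ZMod.card]; omega⟩
  have : quadRes p = nthRootsFinset (2 * m) (1 : ZMod p) := by
    ext x
    have := (Fact.out : p.Prime).two_le
    rw [mem_coe, mem_nthRootsFinset (by omega), mem_quadRes_iff hpm]
  rw [this, Set.ncard_coe_finset, hζ.card_nthRootsFinset]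

theorem diffCountSet_quartRes_mul (hm : Odd m) (hpm : p = 4 * m + 1) {u : ZMod p}
    (hu : u ^ m = 1) (x : ZMod p) :
    diffCountSet (quartRes p) (u * x) = diffCountSet (quartRes p) x := by
  refine diffCountSet_mul_left (fun h => ?_) (fun a => ?_) x
  · simp [h, hm.pos.ne'] at hu
  · rw [mem_quartRes_iff hm hpm, mem_quartRes_iff hm hpm, mul_pow, hu, one_mul]

theorem diffCountSet_quartRes_eq_of_pow_eq (hm : Odd m) (hpm : p = 4 * m + 1) {x y : ZMod p}
    (hy : y ≠ 0) (hxy : x ^ (2 * m) = y ^ (2 * m)) :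
    diffCountSet (quartRes p) x = diffCountSet (quartRes p) y := by
  have hxu : x = x / y * y := (div_mul_cancel₀ x hy).symm
  have hu : ((x / y) ^ m) ^ 2 = 1 := by
    rw [← pow_mul, div_pow, mul_comm, hxy, div_self (pow_ne_zero _ hy)]
  rcases sq_eq_one_iff.mp hu with hu | hu
  · rw [hxu, diffCountSet_quartRes_mul hm hpm hu]
  · rw [hxu, ← diffCountSet_neg, ← neg_mul,
      diffCountSet_quartRes_mul hm hpm (by rw [hm.neg_pow, hu, neg_neg])]

theorem isBidiffRel_quartRes (hm : Odd m) (hpm : p = 4 * m + 1) {n : ZMod p}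
    (hn : n ^ (2 * m) = -1) :
    IsBidiffRel (quartRes p) (insert 0 (quadRes p))
      (diffCountSet (quartRes p) 1) (diffCountSet (quartRes p) n) := by
  have hn0 : n ≠ 0 := ne_zero_of_pow_eq_neg_one (mul_ne_zero two_ne_zero hm.pos.ne') hn
  refine ⟨Set.mem_insert 0 _, fun x hx hx0 => ?_, fun x hx => ?_⟩
  · rw [Set.mem_insert_iff, or_iff_right hx0, mem_quadRes_iff hpm] at hx
    exact diffCountSet_quartRes_eq_of_pow_eq hm hpm one_ne_zero (by rw [hx, one_pow])
  · rw [Set.mem_insert_iff, not_or, mem_quadRes_iff hpm] at hx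
    refine diffCountSet_quartRes_eq_of_pow_eq hm hpm hn0 ?_
    rw [hn, (pow_two_mul_eq_one_or_neg_one hpm hx.1).resolve_left hx.2]

/-- Double counting: the substitution `x ↦ n x` swaps squares and nonsquares, so
`2 ∑ₓ N(x) = ∑ₓ (N(x) + N(n x)) = 4m(λ + μ)`, while `∑ₓ N(x) = m(m - 1)`. -/
theorem two_mul_diffCountSet_quartRes_add (hm : Odd m) (hpm : p = 4 * m + 1) {n : ZMod p}
    (hn : n ^ (2 * m) = -1) :
    2 * (diffCountSet (quartRes p) 1 + diffCountSet (quartRes p) n) = m - 1 := by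
  have hn0 : n ≠ 0 := ne_zero_of_pow_eq_neg_one (mul_ne_zero two_ne_zero hm.pos.ne') hn
  have hpair : ∀ x : ZMod p, x ≠ 0 →
      diffCountSet (quartRes p) x + diffCountSet (quartRes p) (n * x) =
        diffCountSet (quartRes p) 1 + diffCountSet (quartRes p) n := by
    intro x hx
    rcases pow_two_mul_eq_one_or_neg_one hpm hx with h | h
    · rw [diffCountSet_quartRes_eq_of_pow_eq hm hpm (x := x) one_ne_zero (by rw [h, one_pow]),
        diffCountSet_quartRes_eq_of_pow_eq hm hpm (x := n * x) hn0 (by rw [mul_pow, h, mul_one])]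
    · rw [diffCountSet_quartRes_eq_of_pow_eq hm hpm (x := x) hn0 (by rw [h, hn]),
        diffCountSet_quartRes_eq_of_pow_eq hm hpm (x := n * x) one_ne_zero
          (by rw [mul_pow, h, hn, one_pow, neg_one_mul, neg_neg]), add_comm]
  have hshift : ∑ x, diffCountSet (quartRes p) (n * x) = ∑ x, diffCountSet (quartRes p) x :=
    Equiv.sum_comp (Equiv.mulLeft₀ n hn0) _
  have hsum : ∑ x, (diffCountSet (quartRes p) x + diffCountSet (quartRes p) (n * x)) =
      4 * m * (diffCountSet (quartRes p) 1 + diffCountSet (quartRes p) n) := by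
    rw [← sum_erase univ (a := 0) (by simp [diffCountSet_zero]),
      sum_congr rfl fun x hx => hpair x (ne_of_mem_erase hx), sum_const,
      card_erase_of_mem (mem_univ _), card_univ, ZMod.card, smul_eq_mul,
      show p - 1 = 4 * m by omega]
  rw [sum_add_distrib, hshift, sum_diffCountSet, ncard_quartRes hm hpm, ← Nat.mul_sub_one] at hsum
  refine Nat.eq_of_mul_eq_mul_left (Nat.mul_pos two_pos hm.pos) ?_
  linarith

theorem ncard_insert_zero_quadRes (hpm : p = 4 * m + 1) :
    (insert 0 (quadRes p)).ncard = 2 * m + 1 := by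
  have h0 : (0 : ZMod p) ∉ quadRes p := fun ⟨z, hz, h⟩ =>
    hz ((pow_eq_zero_iff two_ne_zero).mp h)
  rw [Set.ncard_insert_of_notMem h0, ncard_quadRes hpm]

theorem not_isBidiffRel_insert_zero_quartRes (hm : Odd m) (hpm : p = 4 * m + 1) {n : ZMod p}
    (hn : n ^ (2 * m) = -1)
    (hne : diffCountSet (quartRes p) 1 ≠ diffCountSet (quartRes p) n) :
    ¬ ∃ lam mu : ℕ, IsBidiffRel (quartRes p) (insert 0 (quartRes p)) lam mu := by
  rintro ⟨lam, mu, h⟩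
  have hn0 : n ≠ 0 := ne_zero_of_pow_eq_neg_one (mul_ne_zero two_ne_zero hm.pos.ne') hn
  have h1 : (-1 : ZMod p) ≠ 1 := Ring.neg_one_ne_one_of_char_ne_two (by
    rw [ZMod.ringChar_zmod_n]; omega)
  have hneg : (-1 : ZMod p) ∉ insert 0 (quartRes p) := by
    rw [Set.mem_insert_iff, mem_quartRes_iff hm hpm, hm.neg_one_pow]
    exact not_or.mpr ⟨neg_ne_zero.mpr one_ne_zero, h1⟩
  have hn' : n ∉ insert 0 (quartRes p) := by
    rw [Set.mem_insert_iff, mem_quartRes_iff hm hpm]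
    exact not_or.mpr ⟨hn0, fun h => h1 (hn.symm.trans (by rw [pow_mul', h, one_pow]))⟩
  exact hne <| (diffCountSet_neg _ 1).symm.trans <|
    h.diffCountSet_eq (neg_ne_zero.mpr one_ne_zero) hn0 (iff_of_false hneg hn')

end ResidueClasses

theorem statement17_general (p q : ℕ) (hp : p.Prime) (hqodd : Odd q)
    (hpq : p = 8 * q + 5) :
    (quartRes p).ncard = (p - 1) / 4 ∧
    (insert (0 : ZMod p) (quadRes p)).ncard = (p + 1) / 2 ∧
    (∃ lam mu : ℕ, lam ≠ mu ∧
      IsBidiffRel (quartRes p) (insert (0 : ZMod p) (quadRes p)) lam mu) ∧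
    (¬ ∃ lam mu : ℕ,
      IsBidiffRel (quartRes p) (insert (0 : ZMod p) (quartRes p)) lam mu) ∧
    (¬ ∃ (H : AddSubgroup (ZMod p)) (lam mu : ℕ),
      IsBidiffRel (quartRes p) (H : Set (ZMod p)) lam mu) := by
  have : Fact p.Prime := ⟨hp⟩
  have hm : Odd (2 * q + 1) := odd_two_mul_add_one q
  have hpm : p = 4 * (2 * q + 1) + 1 := by omega
  obtain ⟨n, hn⟩ := exists_pow_two_mul_eq_neg_one hpm
  have hne : diffCountSet (quartRes p) 1 ≠ diffCountSet (quartRes p) n := by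
    have := two_mul_diffCountSet_quartRes_add hm hpm hn
    obtain ⟨r, rfl⟩ := hqodd
    omega
  have hn0 : n ≠ 0 := ne_zero_of_pow_eq_neg_one (by omega) hn
  refine ⟨?_, ?_, ⟨_, _, hne, isBidiffRel_quartRes hm hpm hn⟩,
    not_isBidiffRel_insert_zero_quartRes hm hpm hn hne,
    ZMod.not_isBidiffRel_addSubgroup one_ne_zero hn0 hne⟩
  · rw [ncard_quartRes hm hpm]; omega
  · rw [ncard_insert_zero_quadRes hpm]; omega

/-- Let `p` be a prime of the form `p = 8q + 5` with `q > 0` odd.  Then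
`R⁽⁴⁾_p` is a proper `(p, (p-1)/4, (p+1)/2, λ, μ)`-bidifference set for `ZMod p` relative
to `R⁽²⁾_p ∪ {0}` (i.e. with `λ ≠ μ`) — in particular a Gaussian difference set — but it
is not a partial difference set (a bidifference set relative to `R⁽⁴⁾_p ∪ {0}`) and not a
divisible difference set (a bidifference set relative to a subgroup) for `ZMod p`. -/
theorem statement17 (p q : ℕ) (hp : p.Prime) (hq : 0 < q) (hqodd : Odd q)
    (hpq : p = 8 * q + 5) :
    (quartRes p).ncard = (p - 1) / 4 ∧
    (insert (0 : ZMod p) (quadRes p)).ncard = (p + 1) / 2 ∧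
    (∃ lam mu : ℕ, lam ≠ mu ∧
      IsBidiffRel (quartRes p) (insert (0 : ZMod p) (quadRes p)) lam mu) ∧
    (¬ ∃ lam mu : ℕ,
      IsBidiffRel (quartRes p) (insert (0 : ZMod p) (quartRes p)) lam mu) ∧
    (¬ ∃ (H : AddSubgroup (ZMod p)) (lam mu : ℕ),
      IsBidiffRel (quartRes p) (H : Set (ZMod p)) lam mu) :=
  statement17_general p q hp hqodd hpq
end
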